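/- Let A = F[x,y]/(x²) and let φ be the F-algebra automorphism of A determined by φ(x) = −x, φ(y) = y. Let R = M₂(A) be the algebra of 2×2 matrices over A, equipped with the involution sending the matrix with entries (a b; c d) to the matrix with entries (φ(d) φ(b); φ(c) φ(a)), and let K = {r ∈ R : r* = −r}. Then every commutator [k₁,k₂] with k₁,k₂ ∈ K lies in x·M₂(A), the Lie subalgebra [K,K] generated by all such commutators is infinite-dimensional over F, and [K,K] is not finitely generated as a Lie algebra. -/

import Mathlib

/-- The commutative algebra `A = F[x,y]/(x²)` of Example 2, with `x = X 0`, `y = X 1`. -/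
noncomputable abbrev ExampleTwoAlg (F : Type*) [Field F] : Type _ :=
  MvPolynomial (Fin 2) F ⧸
    Ideal.span {(MvPolynomial.X 0 : MvPolynomial (Fin 2) F) ^ 2}

/-- The image of `x` in `A = F[x,y]/(x²)`. -/
noncomputable abbrev ExampleTwoAlg.x (F : Type*) [Field F] : ExampleTwoAlg F :=
  Ideal.Quotient.mk _ (MvPolynomial.X 0)

/-- The image of `y` in `A = F[x,y]/(x²)`. -/
noncomputable abbrev ExampleTwoAlg.y (F : Type*) [Field F] : ExampleTwoAlg F :=
  Ideal.Quotient.mk _ (MvPolynomial.X 1)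

/-- The involution `(a b; c d) ↦ (φ d, φ b; φ c, φ a)` on `R = M₂(A)`;
as an index map it is `(i,j) ↦ (1-j, 1-i)`. -/
noncomputable def exampleTwoInv (F : Type*) [Field F]
    (φ : ExampleTwoAlg F ≃ₐ[F] ExampleTwoAlg F) :
    Matrix (Fin 2) (Fin 2) (ExampleTwoAlg F) → Matrix (Fin 2) (Fin 2) (ExampleTwoAlg F) :=
  fun M => Matrix.of fun i j => φ (M (1 - j) (1 - i))

attribute [local instance 100] LieRing.ofAssociativeRing

/-! Since `φ` fixes `y` and negates `x`, it is the identity modulo `x`; as `2` is invertible,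
every `a` with `φ a = -a` is divisible by `x`. The off-diagonal entries `b, c` of a skew matrix
satisfy `φ b = -b`, `φ c = -c`, and the commutator of two matrices whose off-diagonal entries lie
in an ideal `I` has all its entries in `I`. So `[K, K]` lies in `M₂(xA)`, which is abelian because
`x² = 0`; a finitely generated abelian Lie algebra is spanned by its generators, so it remains to
see that `[K, K]` is infinite-dimensional. It contains `x yⁿ E₀₁ = ½ [x E₀₁, diag(-yⁿ, yⁿ)]` for all
`n`, and these are linearly independent, as `A → F[y][ε]`, `x ↦ ε`, `y ↦ y` shows. -/

namespace Matrix

variable {n R : Type*} [Fintype n] [CommRing R] {I : Ideal R}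

theorem lie_apply_mem_of_offDiag_mem [DecidableEq n] {M N : Matrix n n R}
    (hM : ∀ i j, i ≠ j → M i j ∈ I) (hN : ∀ i j, i ≠ j → N i j ∈ I) (i j : n) :
    ⁅M, N⁆ i j ∈ I := by
  rw [Ring.lie_def, sub_apply, mul_apply, mul_apply, ← Finset.sum_sub_distrib]
  refine sum_mem fun k _ => ?_
  obtain rfl | hik := eq_or_ne i k
  · obtain rfl | hij := eq_or_ne i j
    · simp [mul_comm]
    · exact sub_mem (I.mul_mem_left _ (hN _ _ hij)) (I.mul_mem_left _ (hM _ _ hij))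
  · exact sub_mem (I.mul_mem_right _ (hM _ _ hik)) (I.mul_mem_right _ (hN _ _ hik))

theorem mul_eq_zero_of_sq_eq_bot (hI : I ^ 2 = ⊥) {M N : Matrix n n R}
    (hM : ∀ i j, M i j ∈ I) (hN : ∀ i j, N i j ∈ I) : M * N = 0 := by
  ext i j
  rw [mul_apply, zero_apply]
  refine Finset.sum_eq_zero fun k _ => ?_
  rw [← Ideal.mem_bot, ← hI, pow_two]
  exact Ideal.mul_mem_mul (hM i k) (hN k j)

end Matrix

namespace Ideal

variable {n A : Type*} (R : Type*) [Fintype n] [DecidableEq n] [CommRing R] [CommRing A]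
  [Algebra R A]

def matrixLieSubalgebra (I : Ideal A) : LieSubalgebra R (Matrix n n A) where
  carrier := {M | ∀ i j, M i j ∈ I}
  add_mem' hM hN i j := add_mem (hM i j) (hN i j)
  zero_mem' _ _ := zero_mem I
  smul_mem' c M hM i j := by
    rw [Matrix.smul_apply, ← algebraMap_smul A, smul_eq_mul]
    exact I.mul_mem_left _ (hM i j)
  lie_mem' hM hN :=
    Matrix.lie_apply_mem_of_offDiag_mem (fun i j _ => hM i j) (fun i j _ => hN i j)

variable {R} {I : Ideal A}

theorem lie_eq_zero_of_mem_matrixLieSubalgebra (hI : I ^ 2 = ⊥) {M N : Matrix n n A}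
    (hM : M ∈ I.matrixLieSubalgebra R) (hN : N ∈ I.matrixLieSubalgebra R) : ⁅M, N⁆ = 0 := by
  rw [Ring.lie_def, Matrix.mul_eq_zero_of_sq_eq_bot hI hM hN,
    Matrix.mul_eq_zero_of_sq_eq_bot hI hN hM, sub_zero]

end Ideal

namespace LieSubalgebra

variable {R L : Type*} [CommRing R] [LieRing L] [LieAlgebra R L]

theorem not_exists_finset_lieSpan_eq_of_lie_eq_zero {H : LieSubalgebra R L}
    (hH : ∀ a ∈ H, ∀ b ∈ H, ⁅a, b⁆ = 0) (hinf : ¬ Module.Finite R H) :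
    ¬ ∃ S : Finset L, (S : Set L) ⊆ H ∧ lieSpan R L S = H := by
  rintro ⟨S, hSH, rfl⟩
  have hspan : (lieSpan R L (S : Set L)).toSubmodule = Submodule.span R S :=
    coe_lieSpan_eq_span_of_forall_lie_eq_zero fun a ha b hb => hH a (hSH ha) b (hSH hb)
  have : Module.Finite R (lieSpan R L (S : Set L)).toSubmodule := hspan ▸ inferInstance
  exact hinf this

end LieSubalgebra

namespace ExampleTwoAlg

open Polynomial DualNumber

variable {F : Type*} [Field F]

theorem x_sq : x F ^ 2 = 0 := by
  rw [← map_pow]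
  exact Ideal.Quotient.eq_zero_iff_mem.2 (Ideal.subset_span rfl)

theorem span_x_sq : Ideal.span {x F} ^ 2 = ⊥ := by
  rw [Ideal.span_singleton_pow, x_sq, Ideal.span_singleton_eq_bot]

section Automorphism

variable {φ : ExampleTwoAlg F ≃ₐ[F] ExampleTwoAlg F} (hφx : φ (x F) = -x F)
  (hφy : φ (y F) = y F)

include hφx hφy

theorem map_sub_self_mem_span_x (a : ExampleTwoAlg F) : φ a - a ∈ Ideal.span {x F} := by
  let π := Ideal.Quotient.mkₐ F (Ideal.span {x F})
  have hπx : π (x F) = 0 := Ideal.Quotient.eq_zero_iff_mem.2 (Ideal.mem_span_singleton_self _)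
  have hπφ : π.comp φ.toAlgHom = π := by
    refine Ideal.Quotient.algHom_ext _ (MvPolynomial.algHom_ext fun i => ?_)
    fin_cases i
    · change π (φ (x F)) = π (x F)
      rw [hφx, map_neg, hπx, neg_zero]
    · change π (φ (y F)) = π (y F)
      rw [hφy]
  exact (Ideal.Quotient.mk_eq_mk_iff_sub_mem _ _).1 (AlgHom.congr_fun hπφ a)

theorem mem_span_x_of_map_eq_neg (h2 : (2 : F) ≠ 0) {a : ExampleTwoAlg F} (ha : φ a = -a) :
    a ∈ Ideal.span {x F} := by
  have ha' : a = -(2 : F)⁻¹ • (φ a - a) := by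
    rw [ha]
    match_scalars
    field_simp
    ring
  rw [ha']
  exact Submodule.smul_of_tower_mem _ _ (map_sub_self_mem_span_x hφx hφy a)

end Automorphism

noncomputable def toDualNumber : ExampleTwoAlg F →ₐ[F] DualNumber F[X] :=
  Ideal.Quotient.liftₐ _ (MvPolynomial.aeval ![ε, TrivSqZeroExt.inl X]) fun a ha => by
    obtain ⟨b, rfl⟩ := Ideal.mem_span_singleton'.1 ha
    simp [pow_two]

theorem toDualNumber_x : toDualNumber (x F) = ε := by
  change MvPolynomial.aeval ![ε, TrivSqZeroExt.inl (X : F[X])] (MvPolynomial.X 0) = _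
  simp

theorem toDualNumber_y : toDualNumber (y F) = TrivSqZeroExt.inl X := by
  change MvPolynomial.aeval ![ε, TrivSqZeroExt.inl (X : F[X])] (MvPolynomial.X 1) = _
  simp

theorem snd_toDualNumber_x_mul_y_pow (n : ℕ) : (toDualNumber (x F * y F ^ n)).snd = X ^ n := by
  rw [map_mul, map_pow, toDualNumber_x, toDualNumber_y, TrivSqZeroExt.inl_pow]
  simp [TrivSqZeroExt.snd_mul]

theorem linearIndependent_x_mul_y_pow : LinearIndependent F fun n : ℕ => x F * y F ^ n := by
  let f : ExampleTwoAlg F →ₗ[F] F[X] := (LinearMap.snd F F[X] F[X]).comp toDualNumber.toLinearMap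
  refine LinearIndependent.of_comp f ?_
  have hf : ∀ n : ℕ, f (x F * y F ^ n) = monomial n 1 := fun n =>
    (snd_toDualNumber_x_mul_y_pow n).trans (X_pow_eq_monomial n)
  simp only [Function.comp_def, hf]
  simpa only [coe_basisMonomials] using (basisMonomials F).linearIndependent

end ExampleTwoAlg

section SkewCommutators

open ExampleTwoAlg Matrix

variable {F : Type*} [Field F] {φ : ExampleTwoAlg F ≃ₐ[F] ExampleTwoAlg F}

def skewCommutators (F : Type*) [Field F] (φ : ExampleTwoAlg F ≃ₐ[F] ExampleTwoAlg F) :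
    Set (Matrix (Fin 2) (Fin 2) (ExampleTwoAlg F)) :=
  {z | ∃ k₁ k₂ : Matrix (Fin 2) (Fin 2) (ExampleTwoAlg F),
    exampleTwoInv F φ k₁ = -k₁ ∧ exampleTwoInv F φ k₂ = -k₂ ∧ z = ⁅k₁, k₂⁆}

theorem exampleTwoInv_apply (M : Matrix (Fin 2) (Fin 2) (ExampleTwoAlg F)) (i j : Fin 2) :
    exampleTwoInv F φ M i j = φ (M (1 - j) (1 - i)) :=
  rfl

theorem map_apply_of_exampleTwoInv_eq_neg {k : Matrix (Fin 2) (Fin 2) (ExampleTwoAlg F)}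
    (hk : exampleTwoInv F φ k = -k) {i j : Fin 2} (hij : i ≠ j) : φ (k i j) = -k i j := by
  have hi : 1 - j = i := by fin_cases i <;> fin_cases j <;> simp_all
  have hj : 1 - i = j := by fin_cases i <;> fin_cases j <;> simp_all
  simpa only [exampleTwoInv_apply, hi, hj, Matrix.neg_apply] using congrFun₂ hk i j

theorem lie_apply_mem_span_x (h2 : (2 : F) ≠ 0) (hφx : φ (x F) = -x F) (hφy : φ (y F) = y F)
    {k₁ k₂ : Matrix (Fin 2) (Fin 2) (ExampleTwoAlg F)}
    (h₁ : exampleTwoInv F φ k₁ = -k₁) (h₂ : exampleTwoInv F φ k₂ = -k₂) (i j : Fin 2) :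
    ⁅k₁, k₂⁆ i j ∈ Ideal.span {x F} :=
  have offDiag_mem {k : Matrix (Fin 2) (Fin 2) (ExampleTwoAlg F)} (hk : exampleTwoInv F φ k = -k)
      (i j : Fin 2) (hij : i ≠ j) : k i j ∈ Ideal.span {x F} :=
    mem_span_x_of_map_eq_neg hφx hφy h2 (map_apply_of_exampleTwoInv_eq_neg hk hij)
  lie_apply_mem_of_offDiag_mem (offDiag_mem h₁) (offDiag_mem h₂) i j

theorem lieSpan_skewCommutators_le (h2 : (2 : F) ≠ 0) (hφx : φ (x F) = -x F)
    (hφy : φ (y F) = y F) :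
    LieSubalgebra.lieSpan F _ (skewCommutators F φ) ≤
      (Ideal.span {x F}).matrixLieSubalgebra F := by
  rw [LieSubalgebra.lieSpan_le]
  rintro _ ⟨k₁, k₂, h₁, h₂, rfl⟩
  exact lie_apply_mem_span_x h2 hφx hφy h₁ h₂

theorem exampleTwoInv_single_x (hφx : φ (x F) = -x F) :
    exampleTwoInv F φ (single 0 1 (x F)) = -single 0 1 (x F) := by
  ext i j
  fin_cases i <;> fin_cases j <;> simp [exampleTwoInv_apply, hφx]

theorem exampleTwoInv_diagonal {c : ExampleTwoAlg F} (hc : φ c = c) :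
    exampleTwoInv F φ (diagonal ![-c, c]) = -diagonal ![-c, c] := by
  ext i j
  fin_cases i <;> fin_cases j <;> simp [exampleTwoInv_apply, hc]

theorem lie_single_diagonal (a c : ExampleTwoAlg F) :
    ⁅(single 0 1 a : Matrix (Fin 2) (Fin 2) (ExampleTwoAlg F)), diagonal ![-c, c]⁆ =
      single 0 1 ((2 : F) • (a * c)) := by
  ext i j
  fin_cases i <;> fin_cases j <;> simp [Ring.lie_def, mul_apply, two_smul]
  ring

theorem single_x_mul_y_pow_mem_lieSpan (h2 : (2 : F) ≠ 0) (hφx : φ (x F) = -x F)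
    (hφy : φ (y F) = y F) (n : ℕ) :
    single 0 1 (x F * y F ^ n) ∈ LieSubalgebra.lieSpan F _ (skewCommutators F φ) := by
  have hyn : φ (y F ^ n) = y F ^ n := by rw [map_pow, hφy]
  have hmem : ⁅(single 0 1 (x F) : Matrix (Fin 2) (Fin 2) (ExampleTwoAlg F)),
      diagonal ![-(y F ^ n), y F ^ n]⁆ ∈ LieSubalgebra.lieSpan F _ (skewCommutators F φ) :=
    LieSubalgebra.subset_lieSpan
      ⟨_, _, exampleTwoInv_single_x hφx, exampleTwoInv_diagonal hyn, rfl⟩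
  rw [lie_single_diagonal] at hmem
  simpa only [smul_single, inv_smul_smul₀ h2] using
    LieSubalgebra.smul_mem _ (2 : F)⁻¹ hmem

theorem not_finiteDimensional_lieSpan_skewCommutators (h2 : (2 : F) ≠ 0)
    (hφx : φ (x F) = -x F) (hφy : φ (y F) = y F) :
    ¬ FiniteDimensional F (LieSubalgebra.lieSpan F _ (skewCommutators F φ)) := by
  intro hfin
  let H := LieSubalgebra.lieSpan F (Matrix (Fin 2) (Fin 2) (ExampleTwoAlg F))
    (skewCommutators F φ)
  let v : ℕ → H := fun n => ⟨_, single_x_mul_y_pow_mem_lieSpan h2 hφx hφy n⟩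
  let f : H →ₗ[F] ExampleTwoAlg F :=
    (entryLinearMap F (ExampleTwoAlg F) 0 1).comp H.toSubmodule.subtype
  have hfv : f ∘ v = fun n => x F * y F ^ n :=
    funext fun _ => single_apply_same (0 : Fin 2) (1 : Fin 2) _
  have hv : LinearIndependent F v := .of_comp f (hfv ▸ linearIndependent_x_mul_y_pow)
  exact Module.Finite.not_linearIndependent_of_infinite _ hv

end SkewCommutators

/-- **Example 2.**  Let `A = F[x,y]/(x²)`, `φ` the `F`-algebra automorphism of `A` with
`φ(x) = -x`, `φ(y) = y`, and `R = M₂(A)` with the involution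
`(a b; c d)* = (φ d, φ b; φ c, φ a)`; let `K` be the skew-symmetric elements.  Then every
commutator `[k₁,k₂]` with `k₁, k₂ ∈ K` lies in `x · M₂(A)`, the Lie subalgebra `[K,K]`
is infinite-dimensional over `F`, and `[K,K]` is not finitely generated as a Lie algebra. -/
theorem exampleTwo_skew_commutators_not_fg
    (F : Type*) [Field F] (hchar : (2 : F) ≠ 0)
    (φ : ExampleTwoAlg F ≃ₐ[F] ExampleTwoAlg F)
    (hφx : φ (ExampleTwoAlg.x F) = - ExampleTwoAlg.x F)
    (hφy : φ (ExampleTwoAlg.y F) = ExampleTwoAlg.y F) :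
    (∀ k₁ k₂ : Matrix (Fin 2) (Fin 2) (ExampleTwoAlg F),
        exampleTwoInv F φ k₁ = -k₁ → exampleTwoInv F φ k₂ = -k₂ →
        ∃ N : Matrix (Fin 2) (Fin 2) (ExampleTwoAlg F),
          ∀ i j, ⁅k₁, k₂⁆ i j = ExampleTwoAlg.x F * N i j) ∧
    ¬ FiniteDimensional F
        (LieSubalgebra.lieSpan F (Matrix (Fin 2) (Fin 2) (ExampleTwoAlg F))
          {z | ∃ k₁ k₂ : Matrix (Fin 2) (Fin 2) (ExampleTwoAlg F),
            exampleTwoInv F φ k₁ = -k₁ ∧ exampleTwoInv F φ k₂ = -k₂ ∧ z = ⁅k₁, k₂⁆}) ∧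
    ¬ ∃ S : Finset (Matrix (Fin 2) (Fin 2) (ExampleTwoAlg F)),
        (S : Set (Matrix (Fin 2) (Fin 2) (ExampleTwoAlg F))) ⊆
          (LieSubalgebra.lieSpan F (Matrix (Fin 2) (Fin 2) (ExampleTwoAlg F))
            {z | ∃ k₁ k₂ : Matrix (Fin 2) (Fin 2) (ExampleTwoAlg F),
              exampleTwoInv F φ k₁ = -k₁ ∧ exampleTwoInv F φ k₂ = -k₂ ∧ z = ⁅k₁, k₂⁆} :
            Set (Matrix (Fin 2) (Fin 2) (ExampleTwoAlg F))) ∧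
        LieSubalgebra.lieSpan F (Matrix (Fin 2) (Fin 2) (ExampleTwoAlg F))
            (S : Set (Matrix (Fin 2) (Fin 2) (ExampleTwoAlg F))) =
          LieSubalgebra.lieSpan F (Matrix (Fin 2) (Fin 2) (ExampleTwoAlg F))
            {z | ∃ k₁ k₂ : Matrix (Fin 2) (Fin 2) (ExampleTwoAlg F),
              exampleTwoInv F φ k₁ = -k₁ ∧ exampleTwoInv F φ k₂ = -k₂ ∧ z = ⁅k₁, k₂⁆} := by
  have hle := lieSpan_skewCommutators_le hchar hφx hφy
  have hinf := not_finiteDimensional_lieSpan_skewCommutators hchar hφx hφy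
  refine ⟨fun k₁ k₂ h₁ h₂ => ?_, hinf, ?_⟩
  · choose N hN using fun i j =>
      Ideal.mem_span_singleton'.1 (lie_apply_mem_span_x hchar hφx hφy h₁ h₂ i j)
    exact ⟨Matrix.of N, fun i j => (hN i j).symm.trans (mul_comm _ _)⟩
  · exact LieSubalgebra.not_exists_finset_lieSpan_eq_of_lie_eq_zero
      (fun _ ha _ hb =>
        Ideal.lie_eq_zero_of_mem_matrixLieSubalgebra ExampleTwoAlg.span_x_sq (hle ha) (hle hb))
      hinf
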